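/- Weak head reduction preserves and reflects evaluation: if M →_wh N then, for all memories S_A, T_A and every choice i, (S_A, M) ⇓ (T_A, i) if and only if (S_A, N) ⇓ (T_A, i). -/

import Mathlib

variable {Loc Ch : Type}

/-- FMC terms: variable, push `[N]a.M`, pop `a<x>.M` (de Bruijn binder),
choice `i`, case `M ; i -> N`, and loop `M^i`. -/
inductive Tm (Loc Ch : Type) : Type where
  | var : ℕ → Tm Loc Ch
  | push : Tm Loc Ch → Loc → Tm Loc Ch → Tm Loc Ch
  | pop : Loc → Tm Loc Ch → Tm Loc Ch
  | choice : Ch → Tm Loc Ch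
  | caseOf : Tm Loc Ch → Ch → Tm Loc Ch → Tm Loc Ch
  | loop : Tm Loc Ch → Ch → Tm Loc Ch

namespace Tm

/-- Shift the free de Bruijn indices `≥ d` up by one. -/
def lift : Tm Loc Ch → ℕ → Tm Loc Ch
  | var n, d => if n < d then var n else var (n + 1)
  | push N a M, d => push (N.lift d) a (M.lift d)
  | pop a M, d => pop a (M.lift (d + 1))
  | choice i, _ => choice i
  | caseOf M i N, d => caseOf (M.lift d) i (N.lift d)
  | loop M i, d => loop (M.lift d) i

/-- Capture-avoiding substitution `{N/k}M` for the de Bruijn index `k`. -/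
def subst : Tm Loc Ch → ℕ → Tm Loc Ch → Tm Loc Ch
  | var n, k, N => if n = k then N else if n < k then var n else var (n - 1)
  | push P a M, k, N => push (P.subst k N) a (M.subst k N)
  | pop a M, k, N => pop a (M.subst (k + 1) (N.lift 0))
  | choice i, _, _ => choice i
  | caseOf M i P, k, N => caseOf (M.subst k N) i (P.subst k N)
  | loop M i, k, N => loop (M.subst k N) i

end Tm

/-- Top-level instances of the reduction rules. -/
inductive TopStep : Tm Loc Ch → Tm Loc Ch → Prop where
  | beta (N : Tm Loc Ch) (a : Loc) (M : Tm Loc Ch) :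
      TopStep (.push N a (.pop a M)) (M.subst 0 N)
  | passage (N : Tm Loc Ch) (a b : Loc) (M : Tm Loc Ch) (h : a ≠ b) :
      TopStep (.push N b (.pop a M)) (.pop a (.push (N.lift 0) b M))
  | select (i : Ch) (M : Tm Loc Ch) :
      TopStep (.caseOf (.choice i) i M) M
  | reject (i j : Ch) (M : Tm Loc Ch) (h : i ≠ j) :
      TopStep (.caseOf (.choice i) j M) (.choice i)
  | prefixPop (a : Loc) (N : Tm Loc Ch) (i : Ch) (M : Tm Loc Ch) :
      TopStep (.caseOf (.pop a N) i M) (.pop a (.caseOf N i (M.lift 0)))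
  | prefixPush (P : Tm Loc Ch) (a : Loc) (N : Tm Loc Ch) (i : Ch) (M : Tm Loc Ch) :
      TopStep (.caseOf (.push P a N) i M) (.push P a (.caseOf N i M))
  | assoc (P : Tm Loc Ch) (i : Ch) (N M : Tm Loc Ch) :
      TopStep (.caseOf (.caseOf P i N) i M) (.caseOf P i (.caseOf N i M))
  | unroll (M : Tm Loc Ch) (i : Ch) :
      TopStep (.loop M i) (.caseOf M i (.loop M i))

/-- Reduction: the closure of the rules under arbitrary contexts. -/
inductive Step : Tm Loc Ch → Tm Loc Ch → Prop where
  | base (M N : Tm Loc Ch) : TopStep M N → Step M N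
  | push_left (N N' : Tm Loc Ch) (a : Loc) (M : Tm Loc Ch) :
      Step N N' → Step (.push N a M) (.push N' a M)
  | push_right (N : Tm Loc Ch) (a : Loc) (M M' : Tm Loc Ch) :
      Step M M' → Step (.push N a M) (.push N a M')
  | pop_body (a : Loc) (M M' : Tm Loc Ch) :
      Step M M' → Step (.pop a M) (.pop a M')
  | case_left (M M' : Tm Loc Ch) (i : Ch) (N : Tm Loc Ch) :
      Step M M' → Step (.caseOf M i N) (.caseOf M' i N)
  | case_right (M : Tm Loc Ch) (i : Ch) (N N' : Tm Loc Ch) :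
      Step N N' → Step (.caseOf M i N) (.caseOf M i N')
  | loop_body (M M' : Tm Loc Ch) (i : Ch) :
      Step M M' → Step (.loop M i) (.loop M' i)

/-- Weak head reduction: the closure of the rules under application
(push) contexts only. -/
inductive WHStep : Tm Loc Ch → Tm Loc Ch → Prop where
  | base (M N : Tm Loc Ch) : TopStep M N → WHStep M N
  | push (P : Tm Loc Ch) (a : Loc) (M M' : Tm Loc Ch) :
      WHStep M M' → WHStep (.push P a M) (.push P a M')

variable [DecidableEq Loc]

/-- A memory: a family of stacks of terms indexed by the locations
(stacks are lists with the head as top). -/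
def Mem (Loc Ch : Type) := Loc → List (Tm Loc Ch)

/-- `S.push a N` pushes `N` onto the stack at location `a`. -/
def Mem.push (S : Mem Loc Ch) (a : Loc) (N : Tm Loc Ch) : Mem Loc Ch :=
  Function.update S a (N :: S a)

/-- The empty memory. -/
def Mem.empty : Mem Loc Ch := fun _ => []

/-- Big-step evaluation `(S, M) ⇓ (T, i)`. -/
inductive Eval : Mem Loc Ch → Tm Loc Ch → Mem Loc Ch → Ch → Prop where
  | choice (S : Mem Loc Ch) (i : Ch) : Eval S (.choice i) S i
  | push (S : Mem Loc Ch) (N : Tm Loc Ch) (a : Loc) (M : Tm Loc Ch) (T : Mem Loc Ch) (i : Ch) :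
      Eval (S.push a N) M T i → Eval S (.push N a M) T i
  | pop (S : Mem Loc Ch) (a : Loc) (N M : Tm Loc Ch) (T : Mem Loc Ch) (i : Ch) :
      Eval S (M.subst 0 N) T i → Eval (S.push a N) (.pop a M) T i
  | case_eq (R S T : Mem Loc Ch) (M N : Tm Loc Ch) (i j : Ch) :
      Eval R M S i → Eval S N T j → Eval R (.caseOf M i N) T j
  | case_ne (R T : Mem Loc Ch) (M N : Tm Loc Ch) (i j : Ch) (h : i ≠ j) :
      Eval R M T i → Eval R (.caseOf M j N) T i
  | loop_eq (R S T : Mem Loc Ch) (M : Tm Loc Ch) (i j : Ch) :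
      Eval R M S i → Eval S (.loop M i) T j → Eval R (.loop M i) T j
  | loop_ne (R T : Mem Loc Ch) (M : Tm Loc Ch) (i j : Ch) (h : i ≠ j) :
      Eval R M T i → Eval R (.loop M j) T i

/-! Evaluation is syntax-directed, so each top-level rule is checked by inverting the evaluation
rules on both of its sides: beta holds because the pop undoes the push, passage because pushes at
distinct locations commute and a lifted term is unaffected by substitution at index `0`, and the
case and loop rules because both sides perform the same evaluations, regrouped. A push context
only pushes onto the memory before evaluating its body, so the equivalence passes from top-level
steps to weak head steps. -/

lemma Tm.subst_lift {Loc : Type} (M : Tm Loc Ch) (d : ℕ) (N : Tm Loc Ch) :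
    (M.lift d).subst d N = M := by
  induction M generalizing d N with
  | var n =>
    by_cases h : n < d
    · simp [lift, subst, h, h.ne]
    · simp [lift, subst, h, show n + 1 ≠ d by omega, show ¬n + 1 < d by omega]
  | _ => simp_all [lift, subst]

namespace Mem

-- `Mem` is a plain `def`, so the simp lemmas about `Function.update` do not fire on `Mem.push`.
@[simp]
lemma push_apply_self (S : Mem Loc Ch) (a : Loc) (N : Tm Loc Ch) : S.push a N a = N :: S a :=
  Function.update_self ..

@[simp]
lemma push_apply_of_ne (S : Mem Loc Ch) {a b : Loc} (h : b ≠ a) (N : Tm Loc Ch) :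
    S.push a N b = S b :=
  Function.update_of_ne h ..

lemma push_inj {S S' : Mem Loc Ch} {a : Loc} {N N' : Tm Loc Ch} :
    S.push a N = S'.push a N' ↔ S = S' ∧ N = N' := by
  refine ⟨fun h => ?_, fun ⟨hS, hN⟩ => hS ▸ hN ▸ rfl⟩
  have hN := congrFun h a
  simp only [push_apply_self, List.cons.injEq] at hN
  refine ⟨funext fun b => ?_, hN.1⟩
  rcases eq_or_ne b a with rfl | hb
  · exact hN.2
  · simpa [hb] using congrFun h b

lemma push_comm (S : Mem Loc Ch) {a b : Loc} (hab : a ≠ b) (P N : Tm Loc Ch) :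
    (S.push a P).push b N = (S.push b N).push a P := by
  funext c
  rcases eq_or_ne c a with rfl | hca
  · simp [hab]
  rcases eq_or_ne c b with rfl | hcb
  · simp [hca]
  · simp [hca, hcb]

lemma push_eq_push_iff_of_ne {S S' : Mem Loc Ch} {a b : Loc} (hab : a ≠ b) {N N' : Tm Loc Ch} :
    S.push b N = S'.push a N' ↔ ∃ S₀ : Mem Loc Ch, S = S₀.push a N' ∧ S' = S₀.push b N := by
  refine ⟨fun h => ⟨Function.update S' b (S b), ?_, ?_⟩,
    fun ⟨S₀, hS, hS'⟩ => hS ▸ hS' ▸ (push_comm S₀ hab.symm _ _).symm⟩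
  all_goals
    funext c
    have hc := congrFun h c
    by_cases hca : c = a <;> by_cases hcb : c = b <;> simp_all [push, Function.update]

end Mem

section Inversion

variable {R S T : Mem Loc Ch} {M N : Tm Loc Ch} {a : Loc} {i j : Ch}

lemma eval_choice_iff : Eval S (.choice j) T i ↔ T = S ∧ i = j :=
  ⟨fun h => by cases h; exact ⟨rfl, rfl⟩, by rintro ⟨rfl, rfl⟩; exact .choice ..⟩

lemma eval_push_iff : Eval S (.push N a M) T i ↔ Eval (S.push a N) M T i :=
  ⟨fun h => by cases h; assumption, .push S N a M T i⟩

lemma eval_pop_iff :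
    Eval S (.pop a M) T i ↔ ∃ S₀ P, S = S₀.push a P ∧ Eval S₀ (M.subst 0 P) T i := by
  refine ⟨fun h => ?_, fun ⟨S₀, P, hS, h⟩ => hS ▸ .pop S₀ a P M T i h⟩
  cases h with
  | pop S₀ _ P _ _ _ h => exact ⟨S₀, P, rfl, h⟩

lemma eval_caseOf_iff :
    Eval R (.caseOf M j N) T i ↔
      (∃ S, Eval R M S j ∧ Eval S N T i) ∨ (i ≠ j ∧ Eval R M T i) := by
  refine ⟨fun h => ?_, ?_⟩
  · cases h with
    | case_eq _ S _ _ _ _ _ hM hN => exact .inl ⟨S, hM, hN⟩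
    | case_ne _ _ _ _ _ _ hij hM => exact .inr ⟨hij, hM⟩
  · rintro (⟨S, hM, hN⟩ | ⟨hij, hM⟩)
    · exact .case_eq R S T M N j i hM hN
    · exact .case_ne R T M N i j hij hM

lemma eval_loop_iff :
    Eval R (.loop M j) T i ↔
      (∃ S, Eval R M S j ∧ Eval S (.loop M j) T i) ∨ (i ≠ j ∧ Eval R M T i) := by
  refine ⟨fun h => ?_, ?_⟩
  · cases h with
    | loop_eq _ S _ _ _ _ hM hN => exact .inl ⟨S, hM, hN⟩
    | loop_ne _ _ _ _ _ hij hM => exact .inr ⟨hij, hM⟩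
  · rintro (⟨S, hM, hN⟩ | ⟨hij, hM⟩)
    · exact .loop_eq R S T M j i hM hN
    · exact .loop_ne R T M i j hij hM

end Inversion

section TopStep

variable {S T : Mem Loc Ch} {i : Ch}

lemma eval_beta_iff (N : Tm Loc Ch) (a : Loc) (M : Tm Loc Ch) :
    Eval S (.push N a (.pop a M)) T i ↔ Eval S (M.subst 0 N) T i := by
  simp [eval_push_iff, eval_pop_iff, Mem.push_inj]

lemma eval_passage_iff (N : Tm Loc Ch) {a b : Loc} (hab : a ≠ b) (M : Tm Loc Ch) :
    Eval S (.push N b (.pop a M)) T i ↔ Eval S (.pop a (.push (N.lift 0) b M)) T i := by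
  simp [eval_push_iff, eval_pop_iff, Tm.subst, Tm.subst_lift, Mem.push_eq_push_iff_of_ne hab]
  exact exists_comm

lemma eval_select_iff (j : Ch) (M : Tm Loc Ch) :
    Eval S (.caseOf (.choice j) j M) T i ↔ Eval S M T i := by
  simp only [eval_caseOf_iff, eval_choice_iff]
  aesop

lemma eval_reject_iff {j k : Ch} (hjk : j ≠ k) (M : Tm Loc Ch) :
    Eval S (.caseOf (.choice j) k M) T i ↔ Eval S (.choice j) T i := by
  simp only [eval_caseOf_iff, eval_choice_iff]
  aesop

lemma eval_prefixPop_iff (a : Loc) (N : Tm Loc Ch) (j : Ch) (M : Tm Loc Ch) :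
    Eval S (.caseOf (.pop a N) j M) T i ↔ Eval S (.pop a (.caseOf N j (M.lift 0))) T i := by
  simp only [eval_caseOf_iff, eval_pop_iff, Tm.subst, Tm.subst_lift]
  aesop

lemma eval_prefixPush_iff (P : Tm Loc Ch) (a : Loc) (N : Tm Loc Ch) (j : Ch) (M : Tm Loc Ch) :
    Eval S (.caseOf (.push P a N) j M) T i ↔ Eval S (.push P a (.caseOf N j M)) T i := by
  simp [eval_caseOf_iff, eval_push_iff]

lemma eval_assoc_iff (P : Tm Loc Ch) (j : Ch) (N M : Tm Loc Ch) :
    Eval S (.caseOf (.caseOf P j N) j M) T i ↔ Eval S (.caseOf P j (.caseOf N j M)) T i := by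
  simp only [eval_caseOf_iff]
  aesop

lemma eval_unroll_iff (M : Tm Loc Ch) (j : Ch) :
    Eval S (.loop M j) T i ↔ Eval S (.caseOf M j (.loop M j)) T i := by
  rw [eval_loop_iff, eval_caseOf_iff]

end TopStep

lemma TopStep.eval_iff {M N : Tm Loc Ch} (h : TopStep M N) (S T : Mem Loc Ch) (i : Ch) :
    Eval S M T i ↔ Eval S N T i := by
  cases h with
  | beta => exact eval_beta_iff ..
  | passage _ _ _ _ hab => exact eval_passage_iff _ hab _
  | select => exact eval_select_iff ..
  | reject _ _ _ hjk => exact eval_reject_iff hjk _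
  | prefixPop => exact eval_prefixPop_iff ..
  | prefixPush => exact eval_prefixPush_iff ..
  | assoc => exact eval_assoc_iff ..
  | unroll => exact eval_unroll_iff ..

/-- Weak head reduction preserves and reflects evaluation. -/
theorem wh_preserves_and_reflects_eval (M N : Tm Loc Ch) (h : WHStep M N)
    (S T : Mem Loc Ch) (i : Ch) :
    Eval S M T i ↔ Eval S N T i := by
  induction h generalizing S with
  | base M N h => exact h.eval_iff S T i
  | push P a M M' _ ih => rw [eval_push_iff, eval_push_iff, ih]
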